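/- Let ω = exp(2πi/5), c = 2cos(2π/5), c′ = 2cos(4π/5). Let T be the 5×5 diagonal complex matrix diag(1, ω, ω², ω³, ω⁴) and let S be the 5×5 complex matrix (1/5)·[[−1, −6, −6, −6, −6], [−1, −2c−c′, 2c′, 2c, −c−2c′], [−1, 2c′, −c−2c′, −2c−c′, 2c], [−1, 2c, −2c−c′, −c−2c′, 2c′], [−1, −c−2c′, 2c, 2c′, −2c−c′]]. Then S² = I₅, T⁵ = I₅ and (S·T)³ = I₅. -/
import Mathlib


open Matrix Real

/-- `ω = exp(2πi/5)`. -/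
noncomputable def ω5 : ℂ := Complex.exp (2 * Real.pi * Complex.I / 5)

/-- `c = 2cos(2π/5)` (as a complex number). -/
noncomputable def c5 : ℂ := (2 * Real.cos (2 * π / 5) : ℝ)

/-- `c′ = 2cos(4π/5)` (as a complex number). -/
noncomputable def c5' : ℂ := (2 * Real.cos (4 * π / 5) : ℝ)

/-- The diagonal matrix `T = diag(1, ω, ω², ω³, ω⁴)`. -/
noncomputable def T5 : Matrix (Fin 5) (Fin 5) ℂ :=
  Matrix.diagonal ![1, ω5, ω5 ^ 2, ω5 ^ 3, ω5 ^ 4]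

/-- The matrix `S` realising the Steinberg representation of `SL(2, ℤ/5)`. -/
noncomputable def S5 : Matrix (Fin 5) (Fin 5) ℂ :=
  (1 / 5 : ℂ) •
    !![-1, -6, -6, -6, -6;
       -1, -2 * c5 - c5', 2 * c5', 2 * c5, -c5 - 2 * c5';
       -1, 2 * c5', -c5 - 2 * c5', -2 * c5 - c5', 2 * c5;
       -1, 2 * c5, -2 * c5 - c5', -c5 - 2 * c5', 2 * c5';
       -1, -c5 - 2 * c5', 2 * c5, 2 * c5', -2 * c5 - c5']

lemma hω5 : ω5 ^ 5 = 1 := by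
  rw [ω5, ← Complex.exp_nat_mul]
  norm_num
  rw [show (5:ℂ) * (2 * (Real.pi:ℂ) * Complex.I / 5) = 2 * Real.pi * Complex.I by ring]
  exact Complex.exp_two_pi_mul_I

lemma hω5ne : ω5 ≠ 1 := by
  intro h
  unfold ω5 at h
  rw [Complex.exp_eq_one_iff] at h
  obtain ⟨n, hn⟩ := h
  have hne : (2 * (Real.pi:ℂ) * Complex.I) ≠ 0 := by
    simp [Real.pi_ne_zero, Complex.I_ne_zero]
  have h5 : (5 : ℂ) * n = 1 := by
    have h2 : (5:ℂ) * n * (2 * (Real.pi:ℂ) * Complex.I) = 1 * (2 * (Real.pi:ℂ) * Complex.I) := by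
      linear_combination (-5 : ℂ) * hn
    exact mul_right_cancel₀ hne h2
  have : (5 * n : ℤ) = 1 := by exact_mod_cast h5
  omega

lemma hsum : ω5 ^ 4 + ω5 ^ 3 + ω5 ^ 2 + ω5 + 1 = 0 := by
  have h : (ω5 - 1) * (ω5 ^ 4 + ω5 ^ 3 + ω5 ^ 2 + ω5 + 1) = 0 := by
    linear_combination hω5
  rcases mul_eq_zero.mp h with h' | h'
  · exact absurd (sub_eq_zero.mp h') hω5ne
  · exact h'

lemma hc : c5 = ω5 + ω5 ^ 4 := by
  have h4 : ω5 ^ 4 = Complex.exp (-(2 * (Real.pi:ℂ) * Complex.I / 5)) := by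
    rw [Complex.exp_neg]
    rw [inv_eq_one_div, eq_div_iff (Complex.exp_ne_zero _), ← ω5, ← pow_succ]
    exact hω5
  rw [c5, h4, ω5]
  push_cast [Complex.ofReal_cos]
  rw [Complex.two_cos]
  congr 2 <;> push_cast <;> ring

lemma hc' : c5' = ω5 ^ 2 + ω5 ^ 3 := by
  have h2 : ω5 ^ 2 = Complex.exp (4 * (Real.pi:ℂ) * Complex.I / 5) := by
    rw [ω5, ← Complex.exp_nat_mul]
    norm_num
    congr 1; ring
  have h3 : ω5 ^ 3 = Complex.exp (-(4 * (Real.pi:ℂ) * Complex.I / 5)) := by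
    rw [Complex.exp_neg, ← h2]
    rw [inv_eq_one_div, eq_div_iff (pow_ne_zero _ (by rw [ω5]; exact Complex.exp_ne_zero _)), ← pow_add]
    exact hω5
  rw [c5', h2, h3]
  push_cast [Complex.ofReal_cos]
  rw [Complex.two_cos]
  congr 2 <;> push_cast <;> ring

theorem smul_fin_five (x : ℂ) (a00 a01 a02 a03 a04 a10 a11 a12 a13 a14 a20 a21 a22 a23 a24 a30 a31 a32 a33 a34 a40 a41 a42 a43 a44 : ℂ) :
    x • !![a00, a01, a02, a03, a04;
     a10, a11, a12, a13, a14;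
     a20, a21, a22, a23, a24;
     a30, a31, a32, a33, a34;
     a40, a41, a42, a43, a44] = !![x * a00, x * a01, x * a02, x * a03, x * a04;
     x * a10, x * a11, x * a12, x * a13, x * a14;
     x * a20, x * a21, x * a22, x * a23, x * a24;
     x * a30, x * a31, x * a32, x * a33, x * a34;
     x * a40, x * a41, x * a42, x * a43, x * a44] := by
  ext i j
  fin_cases i <;> fin_cases j <;> simp [Matrix.smul_apply]

theorem mul_fin_five (a00 a01 a02 a03 a04 a10 a11 a12 a13 a14 a20 a21 a22 a23 a24 a30 a31 a32 a33 a34 a40 a41 a42 a43 a44 b00 b01 b02 b03 b04 b10 b11 b12 b13 b14 b20 b21 b22 b23 b24 b30 b31 b32 b33 b34 b40 b41 b42 b43 b44 : ℂ) :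
    !![a00, a01, a02, a03, a04;
     a10, a11, a12, a13, a14;
     a20, a21, a22, a23, a24;
     a30, a31, a32, a33, a34;
     a40, a41, a42, a43, a44] * !![b00, b01, b02, b03, b04;
     b10, b11, b12, b13, b14;
     b20, b21, b22, b23, b24;
     b30, b31, b32, b33, b34;
     b40, b41, b42, b43, b44] = !![a00 * b00 + a01 * b10 + a02 * b20 + a03 * b30 + a04 * b40, a00 * b01 + a01 * b11 + a02 * b21 + a03 * b31 + a04 * b41, a00 * b02 + a01 * b12 + a02 * b22 + a03 * b32 + a04 * b42, a00 * b03 + a01 * b13 + a02 * b23 + a03 * b33 + a04 * b43, a00 * b04 + a01 * b14 + a02 * b24 + a03 * b34 + a04 * b44;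
     a10 * b00 + a11 * b10 + a12 * b20 + a13 * b30 + a14 * b40, a10 * b01 + a11 * b11 + a12 * b21 + a13 * b31 + a14 * b41, a10 * b02 + a11 * b12 + a12 * b22 + a13 * b32 + a14 * b42, a10 * b03 + a11 * b13 + a12 * b23 + a13 * b33 + a14 * b43, a10 * b04 + a11 * b14 + a12 * b24 + a13 * b34 + a14 * b44;
     a20 * b00 + a21 * b10 + a22 * b20 + a23 * b30 + a24 * b40, a20 * b01 + a21 * b11 + a22 * b21 + a23 * b31 + a24 * b41, a20 * b02 + a21 * b12 + a22 * b22 + a23 * b32 + a24 * b42, a20 * b03 + a21 * b13 + a22 * b23 + a23 * b33 + a24 * b43, a20 * b04 + a21 * b14 + a22 * b24 + a23 * b34 + a24 * b44;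
     a30 * b00 + a31 * b10 + a32 * b20 + a33 * b30 + a34 * b40, a30 * b01 + a31 * b11 + a32 * b21 + a33 * b31 + a34 * b41, a30 * b02 + a31 * b12 + a32 * b22 + a33 * b32 + a34 * b42, a30 * b03 + a31 * b13 + a32 * b23 + a33 * b33 + a34 * b43, a30 * b04 + a31 * b14 + a32 * b24 + a33 * b34 + a34 * b44;
     a40 * b00 + a41 * b10 + a42 * b20 + a43 * b30 + a44 * b40, a40 * b01 + a41 * b11 + a42 * b21 + a43 * b31 + a44 * b41, a40 * b02 + a41 * b12 + a42 * b22 + a43 * b32 + a44 * b42, a40 * b03 + a41 * b13 + a42 * b23 + a43 * b33 + a44 * b43, a40 * b04 + a41 * b14 + a42 * b24 + a43 * b34 + a44 * b44] := by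
  ext i j
  fin_cases i <;> fin_cases j <;>
    simp [Matrix.mul_apply, Fin.sum_univ_five]

theorem one_fin_five : (1 : Matrix (Fin 5) (Fin 5) ℂ) = !![1, 0, 0, 0, 0;
     0, 1, 0, 0, 0;
     0, 0, 1, 0, 0;
     0, 0, 0, 1, 0;
     0, 0, 0, 0, 1] := by
  ext i j
  fin_cases i <;> fin_cases j <;> simp [Matrix.one_apply, Matrix.vecHead, Matrix.vecTail]

theorem fin5_mat_eq {a00 a01 a02 a03 a04 a10 a11 a12 a13 a14 a20 a21 a22 a23 a24 a30 a31 a32 a33 a34 a40 a41 a42 a43 a44 b00 b01 b02 b03 b04 b10 b11 b12 b13 b14 b20 b21 b22 b23 b24 b30 b31 b32 b33 b34 b40 b41 b42 b43 b44 : ℂ}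
    (h00 : a00 = b00) (h01 : a01 = b01) (h02 : a02 = b02) (h03 : a03 = b03) (h04 : a04 = b04) (h10 : a10 = b10) (h11 : a11 = b11) (h12 : a12 = b12) (h13 : a13 = b13) (h14 : a14 = b14) (h20 : a20 = b20) (h21 : a21 = b21) (h22 : a22 = b22) (h23 : a23 = b23) (h24 : a24 = b24) (h30 : a30 = b30) (h31 : a31 = b31) (h32 : a32 = b32) (h33 : a33 = b33) (h34 : a34 = b34) (h40 : a40 = b40) (h41 : a41 = b41) (h42 : a42 = b42) (h43 : a43 = b43) (h44 : a44 = b44) :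
    !![a00, a01, a02, a03, a04;
     a10, a11, a12, a13, a14;
     a20, a21, a22, a23, a24;
     a30, a31, a32, a33, a34;
     a40, a41, a42, a43, a44] = !![b00, b01, b02, b03, b04;
     b10, b11, b12, b13, b14;
     b20, b21, b22, b23, b24;
     b30, b31, b32, b33, b34;
     b40, b41, b42, b43, b44] := by
  subst_vars; rfl

lemma hS5lit : S5 = !![1 / 5 * (-1), 1 / 5 * (-6), 1 / 5 * (-6), 1 / 5 * (-6), 1 / 5 * (-6);
       1 / 5 * (-1), 1 / 5 * (-2 * c5 - c5'), 1 / 5 * (2 * c5'), 1 / 5 * (2 * c5), 1 / 5 * (-c5 - 2 * c5');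
       1 / 5 * (-1), 1 / 5 * (2 * c5'), 1 / 5 * (-c5 - 2 * c5'), 1 / 5 * (-2 * c5 - c5'), 1 / 5 * (2 * c5);
       1 / 5 * (-1), 1 / 5 * (2 * c5), 1 / 5 * (-2 * c5 - c5'), 1 / 5 * (-c5 - 2 * c5'), 1 / 5 * (2 * c5');
       1 / 5 * (-1), 1 / 5 * (-c5 - 2 * c5'), 1 / 5 * (2 * c5), 1 / 5 * (2 * c5'), 1 / 5 * (-2 * c5 - c5')] := by
  rw [S5, smul_fin_five]

lemma hT5lit : T5 = !![1, 0, 0, 0, 0;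
       0, ω5, 0, 0, 0;
       0, 0, ω5 ^ 2, 0, 0;
       0, 0, 0, ω5 ^ 3, 0;
       0, 0, 0, 0, ω5 ^ 4] := by
  rw [T5]
  ext i j
  fin_cases i <;> fin_cases j <;>
    simp [Matrix.diagonal, Matrix.vecHead, Matrix.vecTail]

set_option maxHeartbeats 2000000 in
lemma part1 : S5 ^ 2 = 1 := by
  rw [pow_two, hS5lit, mul_fin_five, one_fin_five]
  apply fin5_mat_eq
  · try simp only [hc, hc']
    linear_combination ((0 : ℂ)) * hsum
  · try simp only [hc, hc']
    linear_combination ((6/25 : ℂ)) * hsum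
  · try simp only [hc, hc']
    linear_combination ((6/25 : ℂ)) * hsum
  · try simp only [hc, hc']
    linear_combination ((6/25 : ℂ)) * hsum
  · try simp only [hc, hc']
    linear_combination ((6/25 : ℂ)) * hsum
  · try simp only [hc, hc']
    linear_combination ((1/25 : ℂ)) * hsum
  · try simp only [hc, hc']
    linear_combination ((-19/25 : ℂ) + (19/25 : ℂ) * ω5 + (9/25 : ℂ) * ω5 ^ 2 + (-1/25 : ℂ) * ω5 ^ 3 + (9/25 : ℂ) * ω5 ^ 4) * hsum
  · try simp only [hc, hc']
    linear_combination ((6/25 : ℂ) + (-6/25 : ℂ) * ω5 + (-6/25 : ℂ) * ω5 ^ 2 + (-6/25 : ℂ) * ω5 ^ 3 + (-6/25 : ℂ) * ω5 ^ 4) * hsum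
  · try simp only [hc, hc']
    linear_combination ((6/25 : ℂ) + (-6/25 : ℂ) * ω5 + (-6/25 : ℂ) * ω5 ^ 2 + (-6/25 : ℂ) * ω5 ^ 3 + (-6/25 : ℂ) * ω5 ^ 4) * hsum
  · try simp only [hc, hc']
    linear_combination ((6/25 : ℂ) + (-6/25 : ℂ) * ω5 + (4/25 : ℂ) * ω5 ^ 2 + (14/25 : ℂ) * ω5 ^ 3 + (4/25 : ℂ) * ω5 ^ 4) * hsum
  · try simp only [hc, hc']
    linear_combination ((1/25 : ℂ)) * hsum
  · try simp only [hc, hc']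
    linear_combination ((6/25 : ℂ) + (-6/25 : ℂ) * ω5 + (-6/25 : ℂ) * ω5 ^ 2 + (-6/25 : ℂ) * ω5 ^ 3 + (-6/25 : ℂ) * ω5 ^ 4) * hsum
  · try simp only [hc, hc']
    linear_combination ((-19/25 : ℂ) + (19/25 : ℂ) * ω5 + (9/25 : ℂ) * ω5 ^ 2 + (-1/25 : ℂ) * ω5 ^ 3 + (9/25 : ℂ) * ω5 ^ 4) * hsum
  · try simp only [hc, hc']
    linear_combination ((6/25 : ℂ) + (-6/25 : ℂ) * ω5 + (4/25 : ℂ) * ω5 ^ 2 + (14/25 : ℂ) * ω5 ^ 3 + (4/25 : ℂ) * ω5 ^ 4) * hsum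
  · try simp only [hc, hc']
    linear_combination ((6/25 : ℂ) + (-6/25 : ℂ) * ω5 + (-6/25 : ℂ) * ω5 ^ 2 + (-6/25 : ℂ) * ω5 ^ 3 + (-6/25 : ℂ) * ω5 ^ 4) * hsum
  · try simp only [hc, hc']
    linear_combination ((1/25 : ℂ)) * hsum
  · try simp only [hc, hc']
    linear_combination ((6/25 : ℂ) + (-6/25 : ℂ) * ω5 + (-6/25 : ℂ) * ω5 ^ 2 + (-6/25 : ℂ) * ω5 ^ 3 + (-6/25 : ℂ) * ω5 ^ 4) * hsum
  · try simp only [hc, hc']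
    linear_combination ((6/25 : ℂ) + (-6/25 : ℂ) * ω5 + (4/25 : ℂ) * ω5 ^ 2 + (14/25 : ℂ) * ω5 ^ 3 + (4/25 : ℂ) * ω5 ^ 4) * hsum
  · try simp only [hc, hc']
    linear_combination ((-19/25 : ℂ) + (19/25 : ℂ) * ω5 + (9/25 : ℂ) * ω5 ^ 2 + (-1/25 : ℂ) * ω5 ^ 3 + (9/25 : ℂ) * ω5 ^ 4) * hsum
  · try simp only [hc, hc']
    linear_combination ((6/25 : ℂ) + (-6/25 : ℂ) * ω5 + (-6/25 : ℂ) * ω5 ^ 2 + (-6/25 : ℂ) * ω5 ^ 3 + (-6/25 : ℂ) * ω5 ^ 4) * hsum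
  · try simp only [hc, hc']
    linear_combination ((1/25 : ℂ)) * hsum
  · try simp only [hc, hc']
    linear_combination ((6/25 : ℂ) + (-6/25 : ℂ) * ω5 + (4/25 : ℂ) * ω5 ^ 2 + (14/25 : ℂ) * ω5 ^ 3 + (4/25 : ℂ) * ω5 ^ 4) * hsum
  · try simp only [hc, hc']
    linear_combination ((6/25 : ℂ) + (-6/25 : ℂ) * ω5 + (-6/25 : ℂ) * ω5 ^ 2 + (-6/25 : ℂ) * ω5 ^ 3 + (-6/25 : ℂ) * ω5 ^ 4) * hsum
  · try simp only [hc, hc']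
    linear_combination ((6/25 : ℂ) + (-6/25 : ℂ) * ω5 + (-6/25 : ℂ) * ω5 ^ 2 + (-6/25 : ℂ) * ω5 ^ 3 + (-6/25 : ℂ) * ω5 ^ 4) * hsum
  · try simp only [hc, hc']
    linear_combination ((-19/25 : ℂ) + (19/25 : ℂ) * ω5 + (9/25 : ℂ) * ω5 ^ 2 + (-1/25 : ℂ) * ω5 ^ 3 + (9/25 : ℂ) * ω5 ^ 4) * hsum

lemma h10 : ω5 ^ 10 = 1 := by rw [show (10:ℕ) = 5*2 from rfl, pow_mul, hω5, one_pow]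
lemma h15 : ω5 ^ 15 = 1 := by rw [show (15:ℕ) = 5*3 from rfl, pow_mul, hω5, one_pow]
lemma h20 : ω5 ^ 20 = 1 := by rw [show (20:ℕ) = 5*4 from rfl, pow_mul, hω5, one_pow]

lemma part2 : T5 ^ 5 = 1 := by
  have hv : (![1, ω5, ω5 ^ 2, ω5 ^ 3, ω5 ^ 4] : Fin 5 → ℂ) ^ 5 = 1 := by
    funext i
    fin_cases i <;>
      norm_num [Pi.pow_apply, Matrix.vecHead, Matrix.vecTail, ← pow_mul, hω5, h10, h15, h20]
  rw [T5, Matrix.diagonal_pow, hv]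
  exact Matrix.diagonal_one

set_option maxHeartbeats 4000000 in
lemma part3 : (S5 * T5) ^ 3 = 1 := by
  rw [show (S5 * T5) ^ 3 = S5 * T5 * (S5 * T5) * (S5 * T5) by rw [pow_succ, pow_two]]
  rw [hS5lit, hT5lit, mul_fin_five, mul_fin_five, mul_fin_five, one_fin_five]
  apply fin5_mat_eq
  · try simp only [hc, hc']
    linear_combination ((-126/125 : ℂ) + (114/125 : ℂ) * ω5 + (-12/125 : ℂ) * ω5 ^ 3 + (6/125 : ℂ) * ω5 ^ 4 + (-72/125 : ℂ) * ω5 ^ 5 + (42/125 : ℂ) * ω5 ^ 6 + (6/125 : ℂ) * ω5 ^ 7 + (-12/125 : ℂ) * ω5 ^ 8) * hsum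
  · try simp only [hc, hc']
    linear_combination ((-6/125 : ℂ) * ω5 + (-6/25 : ℂ) * ω5 ^ 2 + (-12/125 : ℂ) * ω5 ^ 3 + (6/125 : ℂ) * ω5 ^ 4 + (6/125 : ℂ) * ω5 ^ 6 + (-18/125 : ℂ) * ω5 ^ 7 + (-12/125 : ℂ) * ω5 ^ 8 + (18/125 : ℂ) * ω5 ^ 9 + (24/125 : ℂ) * ω5 ^ 10 + (-18/125 : ℂ) * ω5 ^ 12 + (-12/125 : ℂ) * ω5 ^ 13) * hsum
  · try simp only [hc, hc']
    linear_combination ((-6/125 : ℂ) * ω5 ^ 2 + (-6/25 : ℂ) * ω5 ^ 3 + (6/125 : ℂ) * ω5 ^ 5 + (-18/125 : ℂ) * ω5 ^ 6 + (12/25 : ℂ) * ω5 ^ 7 + (6/125 : ℂ) * ω5 ^ 8 + (-18/25 : ℂ) * ω5 ^ 9 + (-12/125 : ℂ) * ω5 ^ 10 + (42/125 : ℂ) * ω5 ^ 11 + (-24/125 : ℂ) * ω5 ^ 12 + (-12/125 : ℂ) * ω5 ^ 13 + (24/125 : ℂ) * ω5 ^ 14) * hsum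
  · try simp only [hc, hc']
    linear_combination ((-6/125 : ℂ) * ω5 ^ 3 + (-6/25 : ℂ) * ω5 ^ 4 + (12/125 : ℂ) * ω5 ^ 5 + (-24/125 : ℂ) * ω5 ^ 6 + (24/125 : ℂ) * ω5 ^ 7 + (24/125 : ℂ) * ω5 ^ 8 + (-12/25 : ℂ) * ω5 ^ 9 + (72/125 : ℂ) * ω5 ^ 10 + (-42/125 : ℂ) * ω5 ^ 11 + (-18/25 : ℂ) * ω5 ^ 12 + (42/125 : ℂ) * ω5 ^ 13 + (24/125 : ℂ) * ω5 ^ 14) * hsum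
  · try simp only [hc, hc']
    linear_combination ((-6/125 : ℂ) * ω5 ^ 4 + (-6/25 : ℂ) * ω5 ^ 5 + (-6/125 : ℂ) * ω5 ^ 6 + (6/125 : ℂ) * ω5 ^ 7 + (-24/125 : ℂ) * ω5 ^ 8 + (18/125 : ℂ) * ω5 ^ 9 + (-6/125 : ℂ) * ω5 ^ 10 + (-6/125 : ℂ) * ω5 ^ 11 + (18/125 : ℂ) * ω5 ^ 12 + (-12/125 : ℂ) * ω5 ^ 13 + (18/125 : ℂ) * ω5 ^ 14 + (-24/125 : ℂ) * ω5 ^ 16) * hsum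
  · try simp only [hc, hc']
    linear_combination ((-1/125 : ℂ) + (-1/25 : ℂ) * ω5 + (-2/125 : ℂ) * ω5 ^ 2 + (1/125 : ℂ) * ω5 ^ 3 + (1/125 : ℂ) * ω5 ^ 5 + (-3/125 : ℂ) * ω5 ^ 6 + (-2/125 : ℂ) * ω5 ^ 7 + (3/125 : ℂ) * ω5 ^ 8 + (4/125 : ℂ) * ω5 ^ 9 + (-3/125 : ℂ) * ω5 ^ 11 + (-2/125 : ℂ) * ω5 ^ 12) * hsum
  · try simp only [hc, hc']
    linear_combination ((-1 : ℂ) + (119/125 : ℂ) * ω5 + (6/125 : ℂ) * ω5 ^ 2 + (-24/125 : ℂ) * ω5 ^ 3 + (12/125 : ℂ) * ω5 ^ 4 + (-77/125 : ℂ) * ω5 ^ 5 + (63/125 : ℂ) * ω5 ^ 6 + (-2/25 : ℂ) * ω5 ^ 7 + (-22/125 : ℂ) * ω5 ^ 8 + (-31/125 : ℂ) * ω5 ^ 9 + (-123/125 : ℂ) * ω5 ^ 10 + (-33/125 : ℂ) * ω5 ^ 11 + (-38/125 : ℂ) * ω5 ^ 12 + (-78/125 : ℂ) * ω5 ^ 13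 + (-9/25 : ℂ) * ω5 ^ 14 + (-24/125 : ℂ) * ω5 ^ 15 + (-7/125 : ℂ) * ω5 ^ 16 + (-2/125 : ℂ) * ω5 ^ 17) * hsum
  · try simp only [hc, hc']
    linear_combination ((-6/125 : ℂ) * ω5 ^ 2 + (6/125 : ℂ) * ω5 ^ 3 + (-12/125 : ℂ) * ω5 ^ 4 + (12/125 : ℂ) * ω5 ^ 5 + (6/125 : ℂ) * ω5 ^ 6 + (-24/125 : ℂ) * ω5 ^ 7 + (2/125 : ℂ) * ω5 ^ 8 + (4/25 : ℂ) * ω5 ^ 9 + (12/25 : ℂ) * ω5 ^ 10 + (68/125 : ℂ) * ω5 ^ 11 + (66/125 : ℂ) * ω5 ^ 12 + (64/125 : ℂ) * ω5 ^ 13 + (48/125 : ℂ) * ω5 ^ 14 + (44/125 : ℂ) * ω5 ^ 15 + (22/125 : ℂ) * ω5 ^ 16 + (6/125 : ℂ) * ω5 ^ 17 + (4/125 : ℂ) * ω5 ^ 18) * hsum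
  · try simp only [hc, hc']
    linear_combination ((-6/125 : ℂ) * ω5 ^ 3 + (6/125 : ℂ) * ω5 ^ 4 + (-18/125 : ℂ) * ω5 ^ 6 + (24/125 : ℂ) * ω5 ^ 7 + (-16/125 : ℂ) * ω5 ^ 8 + (-6/125 : ℂ) * ω5 ^ 9 + (52/125 : ℂ) * ω5 ^ 10 + (16/125 : ℂ) * ω5 ^ 11 + (64/125 : ℂ) * ω5 ^ 12 + (14/25 : ℂ) * ω5 ^ 13 + (56/125 : ℂ) * ω5 ^ 14 + (74/125 : ℂ) * ω5 ^ 15 + (48/125 : ℂ) * ω5 ^ 16 + (18/125 : ℂ) * ω5 ^ 17 + (4/125 : ℂ) * ω5 ^ 18) * hsum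
  · try simp only [hc, hc']
    linear_combination ((-6/125 : ℂ) * ω5 ^ 4 + (6/125 : ℂ) * ω5 ^ 5 + (-18/125 : ℂ) * ω5 ^ 6 + (12/125 : ℂ) * ω5 ^ 7 + (12/125 : ℂ) * ω5 ^ 8 + (-28/125 : ℂ) * ω5 ^ 9 + (16/125 : ℂ) * ω5 ^ 10 + (-51/125 : ℂ) * ω5 ^ 11 + (-48/125 : ℂ) * ω5 ^ 12 + (-2/25 : ℂ) * ω5 ^ 13 + (-101/125 : ℂ) * ω5 ^ 14 + (-77/125 : ℂ) * ω5 ^ 15 + (-8/25 : ℂ) * ω5 ^ 16 + (-48/125 : ℂ) * ω5 ^ 17 + (-21/125 : ℂ) * ω5 ^ 18 + (-8/125 : ℂ) * ω5 ^ 19 + (-4/125 : ℂ) * ω5 ^ 20) * hsum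
  · try simp only [hc, hc']
    linear_combination ((-1/125 : ℂ) + (-1/25 : ℂ) * ω5 + (1/125 : ℂ) * ω5 ^ 3 + (-3/125 : ℂ) * ω5 ^ 4 + (2/25 : ℂ) * ω5 ^ 5 + (1/125 : ℂ) * ω5 ^ 6 + (-3/25 : ℂ) * ω5 ^ 7 + (-2/125 : ℂ) * ω5 ^ 8 + (7/125 : ℂ) * ω5 ^ 9 + (-4/125 : ℂ) * ω5 ^ 10 + (-2/125 : ℂ) * ω5 ^ 11 + (4/125 : ℂ) * ω5 ^ 12) * hsum
  · try simp only [hc, hc']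
    linear_combination ((-6/125 : ℂ) * ω5 + (6/125 : ℂ) * ω5 ^ 2 + (-12/125 : ℂ) * ω5 ^ 3 + (12/125 : ℂ) * ω5 ^ 4 + (6/125 : ℂ) * ω5 ^ 5 + (-24/125 : ℂ) * ω5 ^ 6 + (2/125 : ℂ) * ω5 ^ 7 + (4/25 : ℂ) * ω5 ^ 8 + (12/25 : ℂ) * ω5 ^ 9 + (68/125 : ℂ) * ω5 ^ 10 + (66/125 : ℂ) * ω5 ^ 11 + (64/125 : ℂ) * ω5 ^ 12 + (48/125 : ℂ) * ω5 ^ 13 + (44/125 : ℂ) * ω5 ^ 14 + (22/125 : ℂ) * ω5 ^ 15 + (6/125 : ℂ) * ω5 ^ 16 + (4/125 : ℂ) * ω5 ^ 17) * hsum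
  · try simp only [hc, hc']
    linear_combination ((-1 : ℂ) + (1 : ℂ) * ω5 + (-6/125 : ℂ) * ω5 ^ 2 + (6/125 : ℂ) * ω5 ^ 3 + (-113/125 : ℂ) * ω5 ^ 5 + (89/125 : ℂ) * ω5 ^ 6 + (6/125 : ℂ) * ω5 ^ 7 + (-6/125 : ℂ) * ω5 ^ 8 + (-9/125 : ℂ) * ω5 ^ 9 + (-114/125 : ℂ) * ω5 ^ 10 + (-3/25 : ℂ) * ω5 ^ 11 + (-77/125 : ℂ) * ω5 ^ 12 + (-106/125 : ℂ) * ω5 ^ 13 + (-2/25 : ℂ) * ω5 ^ 14 + (-52/125 : ℂ) * ω5 ^ 15 + (-28/125 : ℂ) * ω5 ^ 16 + (4/125 : ℂ) * ω5 ^ 17 + (-8/125 : ℂ) * ω5 ^ 18) * hsum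
  · try simp only [hc, hc']
    linear_combination ((-6/125 : ℂ) * ω5 ^ 3 + (6/125 : ℂ) * ω5 ^ 4 + (12/125 : ℂ) * ω5 ^ 5 + (-18/125 : ℂ) * ω5 ^ 6 + (-18/125 : ℂ) * ω5 ^ 7 + (6/125 : ℂ) * ω5 ^ 8 + (-14/125 : ℂ) * ω5 ^ 9 + (12/125 : ℂ) * ω5 ^ 10 + (-33/125 : ℂ) * ω5 ^ 11 + (-103/125 : ℂ) * ω5 ^ 12 + (-12/25 : ℂ) * ω5 ^ 13 + (-66/125 : ℂ) * ω5 ^ 14 + (-73/125 : ℂ) * ω5 ^ 15 + (-33/125 : ℂ) * ω5 ^ 16 + (-18/125 : ℂ) * ω5 ^ 17 + (-8/125 : ℂ) * ω5 ^ 18) * hsum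
  · try simp only [hc, hc']
    linear_combination ((-6/125 : ℂ) * ω5 ^ 4 + (6/125 : ℂ) * ω5 ^ 5 + (-6/125 : ℂ) * ω5 ^ 6 + (12/125 : ℂ) * ω5 ^ 7 + (-6/25 : ℂ) * ω5 ^ 8 + (6/125 : ℂ) * ω5 ^ 9 + (28/125 : ℂ) * ω5 ^ 10 + (-12/125 : ℂ) * ω5 ^ 11 + (78/125 : ℂ) * ω5 ^ 12 + (44/125 : ℂ) * ω5 ^ 13 + (62/125 : ℂ) * ω5 ^ 14 + (94/125 : ℂ) * ω5 ^ 15 + (34/125 : ℂ) * ω5 ^ 16 + (46/125 : ℂ) * ω5 ^ 17 + (22/125 : ℂ) * ω5 ^ 18 + (8/125 : ℂ) * ω5 ^ 20) * hsum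
  · try simp only [hc, hc']
    linear_combination ((-1/125 : ℂ) + (-1/25 : ℂ) * ω5 + (2/125 : ℂ) * ω5 ^ 2 + (-4/125 : ℂ) * ω5 ^ 3 + (4/125 : ℂ) * ω5 ^ 4 + (4/125 : ℂ) * ω5 ^ 5 + (-2/25 : ℂ) * ω5 ^ 6 + (12/125 : ℂ) * ω5 ^ 7 + (-7/125 : ℂ) * ω5 ^ 8 + (-3/25 : ℂ) * ω5 ^ 9 + (7/125 : ℂ) * ω5 ^ 10 + (4/125 : ℂ) * ω5 ^ 11) * hsum
  · try simp only [hc, hc']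
    linear_combination ((-6/125 : ℂ) * ω5 + (6/125 : ℂ) * ω5 ^ 2 + (-18/125 : ℂ) * ω5 ^ 4 + (24/125 : ℂ) * ω5 ^ 5 + (-16/125 : ℂ) * ω5 ^ 6 + (-6/125 : ℂ) * ω5 ^ 7 + (52/125 : ℂ) * ω5 ^ 8 + (16/125 : ℂ) * ω5 ^ 9 + (64/125 : ℂ) * ω5 ^ 10 + (14/25 : ℂ) * ω5 ^ 11 + (56/125 : ℂ) * ω5 ^ 12 + (74/125 : ℂ) * ω5 ^ 13 + (48/125 : ℂ) * ω5 ^ 14 + (18/125 : ℂ) * ω5 ^ 15 + (4/125 : ℂ) * ω5 ^ 16) * hsum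
  · try simp only [hc, hc']
    linear_combination ((-6/125 : ℂ) * ω5 ^ 2 + (6/125 : ℂ) * ω5 ^ 3 + (12/125 : ℂ) * ω5 ^ 4 + (-18/125 : ℂ) * ω5 ^ 5 + (-18/125 : ℂ) * ω5 ^ 6 + (6/125 : ℂ) * ω5 ^ 7 + (-14/125 : ℂ) * ω5 ^ 8 + (12/125 : ℂ) * ω5 ^ 9 + (-33/125 : ℂ) * ω5 ^ 10 + (-103/125 : ℂ) * ω5 ^ 11 + (-12/25 : ℂ) * ω5 ^ 12 + (-66/125 : ℂ) * ω5 ^ 13 + (-73/125 : ℂ) * ω5 ^ 14 + (-33/125 : ℂ) * ω5 ^ 15 + (-18/125 : ℂ) * ω5 ^ 16 + (-8/125 : ℂ) * ω5 ^ 17) * hsum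
  · try simp only [hc, hc']
    linear_combination ((-1 : ℂ) + (1 : ℂ) * ω5 + (-6/125 : ℂ) * ω5 ^ 3 + (6/125 : ℂ) * ω5 ^ 4 + (-101/125 : ℂ) * ω5 ^ 5 + (77/125 : ℂ) * ω5 ^ 6 + (-2/125 : ℂ) * ω5 ^ 8 + (-2/125 : ℂ) * ω5 ^ 9 + (-93/125 : ℂ) * ω5 ^ 10 + (13/125 : ℂ) * ω5 ^ 11 + (-2/25 : ℂ) * ω5 ^ 12 + (-4/5 : ℂ) * ω5 ^ 13 + (-83/125 : ℂ) * ω5 ^ 14 + (-16/25 : ℂ) * ω5 ^ 15 + (-49/125 : ℂ) * ω5 ^ 16 + (-9/125 : ℂ) * ω5 ^ 17) * hsum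
  · try simp only [hc, hc']
    linear_combination ((-6/125 : ℂ) * ω5 ^ 4 + (6/125 : ℂ) * ω5 ^ 5 + (6/125 : ℂ) * ω5 ^ 6 + (-18/125 : ℂ) * ω5 ^ 7 + (-12/125 : ℂ) * ω5 ^ 8 + (2/25 : ℂ) * ω5 ^ 9 + (6/25 : ℂ) * ω5 ^ 10 + (22/125 : ℂ) * ω5 ^ 11 + (14/125 : ℂ) * ω5 ^ 12 + (48/125 : ℂ) * ω5 ^ 13 + (14/25 : ℂ) * ω5 ^ 14 + (18/25 : ℂ) * ω5 ^ 15 + (68/125 : ℂ) * ω5 ^ 16 + (6/25 : ℂ) * ω5 ^ 17 + (4/25 : ℂ) * ω5 ^ 18 + (8/125 : ℂ) * ω5 ^ 19) * hsum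
  · try simp only [hc, hc']
    linear_combination ((-1/125 : ℂ) + (-1/25 : ℂ) * ω5 + (-1/125 : ℂ) * ω5 ^ 2 + (1/125 : ℂ) * ω5 ^ 3 + (-4/125 : ℂ) * ω5 ^ 4 + (3/125 : ℂ) * ω5 ^ 5 + (-1/125 : ℂ) * ω5 ^ 6 + (-1/125 : ℂ) * ω5 ^ 7 + (3/125 : ℂ) * ω5 ^ 8 + (-2/125 : ℂ) * ω5 ^ 9 + (3/125 : ℂ) * ω5 ^ 10 + (-4/125 : ℂ) * ω5 ^ 12) * hsum
  · try simp only [hc, hc']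
    linear_combination ((-6/125 : ℂ) * ω5 + (6/125 : ℂ) * ω5 ^ 2 + (-18/125 : ℂ) * ω5 ^ 3 + (12/125 : ℂ) * ω5 ^ 4 + (12/125 : ℂ) * ω5 ^ 5 + (-28/125 : ℂ) * ω5 ^ 6 + (16/125 : ℂ) * ω5 ^ 7 + (-51/125 : ℂ) * ω5 ^ 8 + (-48/125 : ℂ) * ω5 ^ 9 + (-2/25 : ℂ) * ω5 ^ 10 + (-101/125 : ℂ) * ω5 ^ 11 + (-77/125 : ℂ) * ω5 ^ 12 + (-8/25 : ℂ) * ω5 ^ 13 + (-48/125 : ℂ) * ω5 ^ 14 + (-21/125 : ℂ) * ω5 ^ 15 + (-8/125 : ℂ) * ω5 ^ 16 + (-4/125 : ℂ) * ω5 ^ 17) * hsum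
  · try simp only [hc, hc']
    linear_combination ((-6/125 : ℂ) * ω5 ^ 2 + (6/125 : ℂ) * ω5 ^ 3 + (-6/125 : ℂ) * ω5 ^ 4 + (12/125 : ℂ) * ω5 ^ 5 + (-6/25 : ℂ) * ω5 ^ 6 + (6/125 : ℂ) * ω5 ^ 7 + (28/125 : ℂ) * ω5 ^ 8 + (-12/125 : ℂ) * ω5 ^ 9 + (78/125 : ℂ) * ω5 ^ 10 + (44/125 : ℂ) * ω5 ^ 11 + (62/125 : ℂ) * ω5 ^ 12 + (94/125 : ℂ) * ω5 ^ 13 + (34/125 : ℂ) * ω5 ^ 14 + (46/125 : ℂ) * ω5 ^ 15 + (22/125 : ℂ) * ω5 ^ 16 + (8/125 : ℂ) * ω5 ^ 18) * hsum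
  · try simp only [hc, hc']
    linear_combination ((-6/125 : ℂ) * ω5 ^ 3 + (6/125 : ℂ) * ω5 ^ 4 + (6/125 : ℂ) * ω5 ^ 5 + (-18/125 : ℂ) * ω5 ^ 6 + (-12/125 : ℂ) * ω5 ^ 7 + (2/25 : ℂ) * ω5 ^ 8 + (6/25 : ℂ) * ω5 ^ 9 + (22/125 : ℂ) * ω5 ^ 10 + (14/125 : ℂ) * ω5 ^ 11 + (48/125 : ℂ) * ω5 ^ 12 + (14/25 : ℂ) * ω5 ^ 13 + (18/25 : ℂ) * ω5 ^ 14 + (68/125 : ℂ) * ω5 ^ 15 + (6/25 : ℂ) * ω5 ^ 16 + (4/25 : ℂ) * ω5 ^ 17 + (8/125 : ℂ) * ω5 ^ 18) * hsum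
  · try simp only [hc, hc']
    linear_combination ((-1 : ℂ) + (1 : ℂ) * ω5 + (-6/125 : ℂ) * ω5 ^ 4 + (-119/125 : ℂ) * ω5 ^ 5 + (113/125 : ℂ) * ω5 ^ 6 + (12/125 : ℂ) * ω5 ^ 7 + (-24/125 : ℂ) * ω5 ^ 8 + (4/125 : ℂ) * ω5 ^ 9 + (-78/125 : ℂ) * ω5 ^ 10 + (41/125 : ℂ) * ω5 ^ 11 + (-9/25 : ℂ) * ω5 ^ 12 + (-78/125 : ℂ) * ω5 ^ 13 + (-32/125 : ℂ) * ω5 ^ 14 + (-104/125 : ℂ) * ω5 ^ 15 + (-58/125 : ℂ) * ω5 ^ 16 + (-31/125 : ℂ) * ω5 ^ 17 + (-22/125 : ℂ) * ω5 ^ 18 + (-4/125 : ℂ) * ω5 ^ 19 + (-8/125 : ℂ) * ω5 ^ 20) * hsum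

theorem stmt_15 : S5 ^ 2 = 1 ∧ T5 ^ 5 = 1 ∧ (S5 * T5) ^ 3 = 1 :=
  ⟨part1, part2, part3⟩
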